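/- Let R be a Noetherian local ring with maximal ideal m and residue field k = R/m, let f = (f_1, …, f_r) be a sequence of elements of m, and let P be a finitely generated R-module. If the Koszul homology H_i(f; P) vanishes for some i, then H_j(f; P) = 0 for all j ≥ i. -/

import Mathlib

open Finset

/-- The module of `i`-chains of the Koszul complex on `n` elements with values in `M`:
functions on the set of `i`-element subsets of `{1, …, n}` (the standard basis of `⋀^i R^n`). -/
abbrev KoszulChain (M : Type) (n i : ℕ) : Type := {T : Finset (Fin n) // T.card = i} → M

/-- The Koszul boundary map `K_{i+1}(f; M) → K_i(f; M)`,
`∂(e_T ⊗ m) = ∑_{s ∈ T} ± f_s • (e_{T \ {s}} ⊗ m)`, written in the dual form on functions. -/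
noncomputable def koszulBoundary {R : Type} [CommRing R] {M : Type} [AddCommGroup M]
    [Module R M] {n : ℕ} (f : Fin n → R) (i : ℕ) (z : KoszulChain M n (i + 1)) :
    KoszulChain M n i := fun T =>
  ∑ s ∈ (Finset.univ \ T.1).attach,
    ((-1 : ℤ) ^ ((T.1.filter (fun a => a < s.1)).card)) •
      (f s.1 • z ⟨insert s.1 T.1, by
        have hs : s.1 ∉ T.1 := (Finset.mem_sdiff.mp s.2).2
        rw [Finset.card_insert_of_notMem hs, T.2]⟩)

/-- Vanishing of the `i`-th Koszul homology `H_i(f; M)` of the Koszul complex `K_•(f; M)`: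
every `i`-cycle is a boundary. -/
def koszulHomologyVanishes (R : Type) [CommRing R] (M : Type) [AddCommGroup M] [Module R M]
    {n : ℕ} (f : Fin n → R) : ℕ → Prop
  | 0 => ∀ z : KoszulChain M n 0, ∃ w : KoszulChain M n 1, koszulBoundary f 0 w = z
  | (i + 1) => ∀ z : KoszulChain M n (i + 1), koszulBoundary f i z = 0 →
      ∃ w : KoszulChain M n (i + 2), koszulBoundary f (i + 1) w = z

section Basic
set_option linter.unusedSectionVars false
variable {R : Type} [CommRing R] {M : Type} [AddCommGroup M] [Module R M] {n : ℕ}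

/-- congruence helper -/
theorem chain_congr {i : ℕ} (z : KoszulChain M n i) {A B : Finset (Fin n)} (hA : A.card = i)
    (hB : B.card = i) (h : A = B) : z ⟨A, hA⟩ = z ⟨B, hB⟩ := by subst h; rfl

/-- the summand of the boundary map, as a total function -/
noncomputable def kterm (f : Fin n → R) (i : ℕ) (z : KoszulChain M n (i + 1))
    (T : {T : Finset (Fin n) // T.card = i}) (s : Fin n) : M :=
  if h : s ∈ T.1 then 0 else
    ((-1 : ℤ) ^ ((T.1.filter (fun a => a < s)).card)) •
      (f s • z ⟨insert s T.1, by rw [Finset.card_insert_of_notMem h, T.2]⟩)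

theorem koszulBoundary_apply (f : Fin n → R) (i : ℕ) (z : KoszulChain M n (i + 1))
    (T : {T : Finset (Fin n) // T.card = i}) :
    koszulBoundary f i z T = ∑ s, kterm f i z T s := by
  rw [koszulBoundary]
  rw [show ∑ s ∈ (Finset.univ \ T.1).attach,
      ((-1 : ℤ) ^ ((T.1.filter (fun a => a < s.1)).card)) •
      (f s.1 • z ⟨insert s.1 T.1, by
        have hs : s.1 ∉ T.1 := (Finset.mem_sdiff.mp s.2).2
        rw [Finset.card_insert_of_notMem hs, T.2]⟩)
      = ∑ s ∈ (Finset.univ \ T.1).attach, kterm f i z T s.1 from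
    Finset.sum_congr rfl (fun s _ => by
      have hs : s.1 ∉ T.1 := (Finset.mem_sdiff.mp s.2).2
      rw [kterm, dif_neg hs])]
  rw [Finset.sum_attach (Finset.univ \ T.1) (kterm f i z T)]
  refine Finset.sum_subset (Finset.sdiff_subset) (fun s _ hs => ?_)
  have : s ∈ T.1 := by
    by_contra h
    exact hs (Finset.mem_sdiff.mpr ⟨Finset.mem_univ s, h⟩)
  rw [kterm, dif_pos this]

theorem koszulBoundary_add (f : Fin n → R) (i : ℕ) (z z' : KoszulChain M n (i + 1)) :
    koszulBoundary f i (z + z') = koszulBoundary f i z + koszulBoundary f i z' := by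
  funext T
  show koszulBoundary f i (z + z') T = koszulBoundary f i z T + koszulBoundary f i z' T
  simp only [koszulBoundary_apply, ← Finset.sum_add_distrib]
  refine Finset.sum_congr rfl (fun s _ => ?_)
  unfold kterm
  split
  · simp
  · simp [smul_add]

theorem koszulBoundary_smul (f : Fin n → R) (i : ℕ) (c : R) (z : KoszulChain M n (i + 1)) :
    koszulBoundary f i (c • z) = c • koszulBoundary f i z := by
  funext T
  show koszulBoundary f i (c • z) T = c • koszulBoundary f i z T
  simp only [koszulBoundary_apply, Finset.smul_sum]
  refine Finset.sum_congr rfl (fun s _ => ?_)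
  unfold kterm
  split
  · simp
  · simp only [Pi.smul_apply]
    rw [smul_comm (f s) c, smul_comm ((-1:ℤ)^_) c]

/-- the boundary as a linear map -/
noncomputable def dLM (f : Fin n → R) (i : ℕ) :
    KoszulChain M n (i + 1) →ₗ[R] KoszulChain M n i where
  toFun := koszulBoundary f i
  map_add' := koszulBoundary_add f i
  map_smul' := koszulBoundary_smul f i

end Basic

section DD
set_option linter.unusedSectionVars false
variable {R : Type} [CommRing R] {M : Type} [AddCommGroup M] [Module R M] {n : ℕ}

theorem filter_lt_insert_card {s t : Fin n} (T : Finset (Fin n)) (hs : s ∉ T) :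
    ((insert s T).filter (fun a => a < t)).card
      = (T.filter (fun a => a < t)).card + (if s < t then 1 else 0) := by
  rw [Finset.filter_insert]
  split
  · rw [Finset.card_insert_of_notMem (fun h => hs (Finset.mem_filter.mp h).1)]
  · simp

noncomputable def kterm2 (f : Fin n → R) (i : ℕ) (z : KoszulChain M n (i + 2))
    (T : {T : Finset (Fin n) // T.card = i}) (s t : Fin n) : M :=
  if h : s ∈ T.1 then 0 else
    ((-1 : ℤ) ^ ((T.1.filter (fun a => a < s)).card)) •
      (f s • kterm f (i+1) z ⟨insert s T.1, by rw [Finset.card_insert_of_notMem h, T.2]⟩ t)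

theorem koszulBoundary_koszulBoundary (f : Fin n → R) (i : ℕ) (z : KoszulChain M n (i + 2)) :
    koszulBoundary f i (koszulBoundary f (i + 1) z) = 0 := by
  funext T
  show koszulBoundary f i (koszulBoundary f (i+1) z) T = 0
  rw [koszulBoundary_apply]
  have step1 : ∀ s, kterm f i (koszulBoundary f (i+1) z) T s = ∑ t, kterm2 f i z T s t := by
    intro s
    rw [kterm]
    split
    · rename_i h
      simp [kterm2, dif_pos h]
    · rename_i h
      rw [koszulBoundary_apply, Finset.smul_sum, Finset.smul_sum]
      exact Finset.sum_congr rfl (fun t _ => by rw [kterm2, dif_neg h])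
  rw [Finset.sum_congr rfl (fun s _ => step1 s)]
  rw [← Finset.sum_product' (s := Finset.univ) (t := Finset.univ)]
  have key : ∀ s t : Fin n, kterm2 f i z T s t + kterm2 f i z T t s = 0 := by
    intro s t
    by_cases hs : s ∈ T.1
    · rw [kterm2, dif_pos hs]
      by_cases ht : t ∈ T.1
      · rw [kterm2, dif_pos ht]; simp
      · rw [kterm2, dif_neg ht, kterm, dif_pos (Finset.mem_insert_of_mem hs)]; simp
    · by_cases ht : t ∈ T.1
      · have h1 : kterm2 f i z T s t = 0 := by
          rw [kterm2, dif_neg hs, kterm, dif_pos (Finset.mem_insert_of_mem ht)]; simp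
        have h2 : kterm2 f i z T t s = 0 := by rw [kterm2, dif_pos ht]
        rw [h1, h2, add_zero]
      · by_cases hst : s = t
        · subst hst
          rw [kterm2, dif_neg hs, kterm, dif_pos (Finset.mem_insert_self s T.1)]
          simp
        · rw [kterm2, dif_neg hs, kterm2, dif_neg ht,
              kterm, dif_neg (by simp [Finset.mem_insert, Ne.symm hst, ht]),
              kterm, dif_neg (by simp [Finset.mem_insert, hst, hs])]
          rw [filter_lt_insert_card T.1 hs, filter_lt_insert_card T.1 ht]
          have hz : z ⟨insert t (insert s T.1), by
                rw [Finset.card_insert_of_notMem (by simp [Finset.mem_insert, Ne.symm hst, ht]),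
                  Finset.card_insert_of_notMem hs, T.2]⟩
              = z ⟨insert s (insert t T.1), by
                rw [Finset.card_insert_of_notMem (by simp [Finset.mem_insert, hst, hs]),
                  Finset.card_insert_of_notMem ht, T.2]⟩ :=
            chain_congr z _ _ (Finset.insert_comm t s T.1)
          rw [hz]
          set x := z ⟨insert s (insert t T.1), _⟩ with hx
          set a := (T.1.filter (fun a => a < s)).card
          set b := (T.1.filter (fun a => a < t)).card
          rw [smul_comm (f s) ((-1:ℤ)^(b + if s < t then 1 else 0)),
              smul_comm (f t) ((-1:ℤ)^(a + if t < s then 1 else 0))]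
          rw [smul_smul ((-1:ℤ)^a) ((-1:ℤ)^(b + if s < t then 1 else 0)),
              smul_smul ((-1:ℤ)^b) ((-1:ℤ)^(a + if t < s then 1 else 0))]
          rw [smul_comm (f s) (f t) x]
          rw [← add_smul]
          convert zero_smul ℤ (f t • f s • x)
          rcases lt_or_gt_of_ne hst with h | h
          · rw [if_pos h, if_neg (asymm h)]
            ring
          · rw [if_neg (asymm h), if_pos h]
            ring
  exact Finset.sum_ninvolution Prod.swap (fun p => key p.1 p.2)
    (fun p hp => by
      intro hc
      apply hp
      have hpe : p.2 = p.1 := congrArg Prod.fst hc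
      have := key p.1 p.2
      rw [hpe] at this ⊢
      have h2 : (2 : ℤ) • kterm2 f i z T p.1 p.1 = 0 := by
        rw [two_smul]; exact this
      -- diagonal term is zero anyway
      rw [kterm2]
      split
      · rfl
      · rw [kterm, dif_pos (Finset.mem_insert_self _ _)]; simp)
    (fun _ => Finset.mem_univ _) (fun _ => rfl)

end DD

section UpDown
variable {n : ℕ}

def fup (T : Finset (Fin n)) : Finset (Fin (n + 1)) :=
  T.map ⟨Fin.castSucc, Fin.castSucc_injective n⟩

theorem last_not_mem_fup (T : Finset (Fin n)) : Fin.last n ∉ fup T := by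
  simp only [fup, Finset.mem_map, Function.Embedding.coeFn_mk]
  rintro ⟨a, -, ha⟩
  exact absurd (ha ▸ Fin.castSucc_lt_last a) (lt_irrefl _)

theorem mem_fup {a : Fin n} {T : Finset (Fin n)} : a.castSucc ∈ fup T ↔ a ∈ T := by
  simp only [fup, Finset.mem_map, Function.Embedding.coeFn_mk]
  constructor
  · rintro ⟨b, hb, hba⟩
    rwa [← Fin.castSucc_injective n hba]
  · exact fun h => ⟨a, h, rfl⟩

theorem card_fup (T : Finset (Fin n)) : (fup T).card = T.card := Finset.card_map _

noncomputable def fdown (T : Finset (Fin (n + 1))) : Finset (Fin n) :=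
  T.preimage Fin.castSucc ((Fin.castSucc_injective n).injOn)

theorem mem_fdown {a : Fin n} {T : Finset (Fin (n + 1))} : a ∈ fdown T ↔ a.castSucc ∈ T :=
  Finset.mem_preimage

theorem fdown_fup (T : Finset (Fin n)) : fdown (fup T) = T := by
  ext a; rw [mem_fdown, mem_fup]

theorem fup_fdown {T : Finset (Fin (n + 1))} (h : Fin.last n ∉ T) : fup (fdown T) = T := by
  ext a
  rcases Fin.eq_castSucc_or_eq_last a with ⟨b, rfl⟩ | rfl
  · rw [mem_fup, mem_fdown]
  · simp [last_not_mem_fup, h]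

theorem card_fdown {T : Finset (Fin (n + 1))} (h : Fin.last n ∉ T) :
    (fdown T).card = T.card := by
  conv_rhs => rw [← fup_fdown h, card_fup]

theorem fup_insert (a : Fin n) (T : Finset (Fin n)) :
    fup (insert a T) = insert a.castSucc (fup T) := Finset.map_insert _ _ _

theorem filter_fup (T : Finset (Fin n)) (s : Fin n) :
    ((fup T).filter (fun a => a < s.castSucc)).card = (T.filter (fun a => a < s)).card := by
  rw [fup, Finset.filter_map, Finset.card_map]
  congr 1

theorem filter_fup_last (T : Finset (Fin n)) :
    ((fup T).filter (fun a => a < Fin.last n)).card = T.card := by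
  rw [Finset.filter_true_of_mem, card_fup]
  intro a ha
  rcases Fin.eq_castSucc_or_eq_last a with ⟨b, rfl⟩ | rfl
  · exact Fin.castSucc_lt_last b
  · exact absurd ha (last_not_mem_fup T)

end UpDown

section Cone
set_option linter.unusedSectionVars false
variable {R : Type} [CommRing R] {M : Type} [AddCommGroup M] [Module R M] {n : ℕ}

def chX {j : ℕ} (z : KoszulChain M (n + 1) j) : KoszulChain M n j := fun T =>
  z ⟨fup T.1, by rw [card_fup, T.2]⟩

def chY {j : ℕ} (z : KoszulChain M (n + 1) (j + 1)) : KoszulChain M n j := fun T =>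
  z ⟨insert (Fin.last n) (fup T.1), by
    rw [Finset.card_insert_of_notMem (last_not_mem_fup T.1), card_fup, T.2]⟩

noncomputable def chI {j : ℕ} (x : KoszulChain M n j) : KoszulChain M (n + 1) j := fun T =>
  if h : Fin.last n ∈ T.1 then 0 else x ⟨fdown T.1, by rw [card_fdown h, T.2]⟩

noncomputable def chK {j : ℕ} (y : KoszulChain M n j) : KoszulChain M (n + 1) (j + 1) :=
  fun T =>
  if h : Fin.last n ∈ T.1 then
    y ⟨fdown (T.1.erase (Fin.last n)), by
      rw [card_fdown (Finset.notMem_erase _ _), Finset.card_erase_of_mem h, T.2]; rfl⟩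
  else 0

theorem chX_chI {j : ℕ} (x : KoszulChain M n j) : chX (chI x) = x := by
  funext T
  show chI x ⟨fup T.1, _⟩ = x T
  rw [chI, dif_neg (last_not_mem_fup T.1)]
  exact chain_congr x _ T.2 (fdown_fup T.1)

theorem chY_chI {j : ℕ} (x : KoszulChain M n (j + 1)) : chY (chI x) = 0 := by
  funext T
  show chI x ⟨insert (Fin.last n) (fup T.1), _⟩ = 0
  rw [chI, dif_pos (Finset.mem_insert_self _ _)]

theorem chY_chK {j : ℕ} (y : KoszulChain M n j) : chY (chK y) = y := by
  funext T
  show chK y ⟨insert (Fin.last n) (fup T.1), _⟩ = y T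
  rw [chK, dif_pos (Finset.mem_insert_self _ _)]
  exact chain_congr y _ T.2
    (by rw [Finset.erase_insert (last_not_mem_fup T.1), fdown_fup])

theorem chX_chK {j : ℕ} (y : KoszulChain M n j) : chX (chK y) = 0 := by
  funext T
  show chK y ⟨fup T.1, _⟩ = 0
  rw [chK, dif_neg (last_not_mem_fup T.1)]

/-- decomposition of a chain on `Fin (n+1)` -/
theorem chain_decomp {j : ℕ} (z : KoszulChain M (n + 1) (j + 1)) :
    z = chI (chX z) + chK (chY z) := by
  funext T
  show z T = chI (chX z) T + chK (chY z) T
  by_cases h : Fin.last n ∈ T.1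
  · rw [chI, dif_pos h, chK, dif_pos h, zero_add]
    exact (chain_congr z _ T.2
      (by rw [fup_fdown (Finset.notMem_erase _ _), Finset.insert_erase h])).symm
  · rw [chK, dif_neg h, add_zero, chI, dif_neg h]
    exact (chain_congr z _ T.2 (fup_fdown h)).symm
end Cone

section Identities
set_option linter.unusedSectionVars false
variable {R : Type} [CommRing R] {M : Type} [AddCommGroup M] [Module R M] {n : ℕ}
variable (f : Fin (n + 1) → R)

/-- E1: X-component of the boundary -/
theorem chX_koszulBoundary {j : ℕ} (z : KoszulChain M (n + 1) (j + 1))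
    (T : {T : Finset (Fin n) // T.card = j}) :
    chX (koszulBoundary f j z) T
      = koszulBoundary (fun b => f b.castSucc) j (chX z) T
        + ((-1 : ℤ) ^ j) • (f (Fin.last n) • chY z T) := by
  show koszulBoundary f j z ⟨fup T.1, _⟩ = _
  rw [koszulBoundary_apply, Fin.sum_univ_castSucc]
  congr 1
  · -- the castSucc part equals d (chX z)
    rw [koszulBoundary_apply]
    refine Finset.sum_congr rfl (fun b _ => ?_)
    rw [kterm, kterm]
    by_cases hb : b ∈ T.1
    · rw [dif_pos (mem_fup.mpr hb), dif_pos hb]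
    · rw [dif_neg (fun hc => hb (mem_fup.mp hc)), dif_neg hb, filter_fup]
      congr 1
      congr 1
      exact chain_congr z _ _ (fup_insert b T.1).symm
  · -- the last term
    rw [kterm, dif_neg (last_not_mem_fup T.1), filter_fup_last, T.2]
    rfl

/-- E2: Y-component of the boundary -/
theorem chY_koszulBoundary {j : ℕ} (z : KoszulChain M (n + 1) (j + 2))
    (T : {T : Finset (Fin n) // T.card = j}) :
    chY (koszulBoundary f (j + 1) z) T
      = koszulBoundary (fun b => f b.castSucc) j (chY z) T := by
  show koszulBoundary f (j + 1) z ⟨insert (Fin.last n) (fup T.1), _⟩ = _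
  rw [koszulBoundary_apply, Fin.sum_univ_castSucc, koszulBoundary_apply]
  rw [kterm, dif_pos (Finset.mem_insert_self _ _), add_zero]
  refine Finset.sum_congr rfl (fun b _ => ?_)
  rw [kterm, kterm]
  have hmem : b.castSucc ∈ insert (Fin.last n) (fup T.1) ↔ b ∈ T.1 := by
    rw [Finset.mem_insert, mem_fup]
    simp [(Fin.castSucc_lt_last b).ne]
  by_cases hb : b ∈ T.1
  · rw [dif_pos (hmem.mpr hb), dif_pos hb]
  · rw [dif_neg (fun hc => hb (hmem.mp hc)), dif_neg hb]
    have hfilter : ((insert (Fin.last n) (fup T.1)).filter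
        (fun a => a < b.castSucc)).card = ((T.1).filter (fun a => a < b)).card := by
      rw [Finset.filter_insert, if_neg (by exact fun hc => absurd (hc.trans (Fin.castSucc_lt_last b)) (lt_irrefl _)), filter_fup]
    rw [hfilter]
    congr 1
    congr 1
    exact chain_congr z _ _ (by rw [fup_insert, Finset.insert_comm])

/-- E4: boundary commutes with `chI` -/
theorem koszulBoundary_chI {j : ℕ} (x : KoszulChain M n (j + 1)) :
    koszulBoundary f j (chI x) = chI (koszulBoundary (fun b => f b.castSucc) j x) := by
  funext T
  show koszulBoundary f j (chI x) T = chI (koszulBoundary (fun b => f b.castSucc) j x) T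
  rw [koszulBoundary_apply, chI]
  by_cases h : Fin.last n ∈ T.1
  · rw [dif_pos h]
    refine Finset.sum_eq_zero (fun s _ => ?_)
    rw [kterm]
    split
    · rfl
    · rw [chI, dif_pos (Finset.mem_insert_of_mem h)]
      simp
  · rw [dif_neg h, koszulBoundary_apply, Fin.sum_univ_castSucc]
    have hlast : kterm f j (chI x) T (Fin.last n) = 0 := by
      rw [kterm, dif_neg h, chI, dif_pos (Finset.mem_insert_self _ _)]
      simp
    rw [hlast, add_zero]
    refine Finset.sum_congr rfl (fun b _ => ?_)
    rw [kterm, kterm]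
    have hmem : b.castSucc ∈ T.1 ↔ b ∈ fdown T.1 := mem_fdown.symm
    by_cases hb : b ∈ fdown T.1
    · rw [dif_pos (hmem.mpr hb), dif_pos hb]
    · rw [dif_neg (fun hc => hb (hmem.mp hc)), dif_neg hb]
      have hT : T.1 = fup (fdown T.1) := (fup_fdown h).symm
      have hfilter : ((T.1).filter (fun a => a < b.castSucc)).card
          = ((fdown T.1).filter (fun a => a < b)).card := by
        rw [← filter_fup (fdown T.1) b, fup_fdown h]
      rw [hfilter]
      congr 1
      congr 1
      rw [chI, dif_neg (by
        rw [Finset.mem_insert]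
        push_neg
        exact ⟨(Fin.castSucc_lt_last b).ne', h⟩)]
      exact chain_congr x _ _ (by
        ext a
        simp [mem_fdown, Finset.mem_insert, Fin.castSucc_inj])
end Identities


section Homology
set_option linter.unusedSectionVars false
variable {R : Type} [CommRing R] {M : Type} [AddCommGroup M] [Module R M] {n : ℕ}

theorem chI_zero {j : ℕ} : chI (0 : KoszulChain M n j) = 0 := by
  funext T
  rw [chI]
  split <;> rfl

theorem chK_zero {j : ℕ} : chK (0 : KoszulChain M n j) = 0 := by
  funext T
  rw [chK]
  split <;> rfl

theorem zsmul_mem' (N : Submodule R M) {x : M} (h : x ∈ N) (c : ℤ) : c • x ∈ N :=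
  N.toAddSubgroup.zsmul_mem h c

noncomputable def cyc (f : Fin n → R) : (j : ℕ) → Submodule R (KoszulChain M n j)
  | 0 => ⊤
  | (m + 1) => LinearMap.ker (dLM f m)

noncomputable def bdry (f : Fin n → R) (j : ℕ) : Submodule R (KoszulChain M n j) :=
  LinearMap.range (dLM f j)

theorem vanish_iff (f : Fin n → R) (j : ℕ) :
    koszulHomologyVanishes R M f j ↔ cyc f j ≤ bdry (M := M) f j := by
  cases j with
  | zero =>
    simp only [koszulHomologyVanishes, cyc, bdry]
    constructor
    · intro h z _
      obtain ⟨w, hw⟩ := h z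
      exact ⟨w, hw⟩
    · intro h z
      obtain ⟨w, hw⟩ := h (Submodule.mem_top (x := z))
      exact ⟨w, hw⟩
  | succ m =>
    simp only [koszulHomologyVanishes, cyc, bdry]
    constructor
    · intro h z hz
      obtain ⟨w, hw⟩ := h z (LinearMap.mem_ker.mp hz)
      exact ⟨w, hw⟩
    · intro h z hz
      obtain ⟨w, hw⟩ := h (LinearMap.mem_ker.mpr hz)
      exact ⟨w, hw⟩

theorem vanish_of_lt (f : Fin n → R) {j : ℕ} (h : n < j) :
    koszulHomologyVanishes R M f j := by
  cases j with
  | zero => omega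
  | succ m =>
    intro z _
    refine ⟨0, ?_⟩
    funext T
    have hc := Finset.card_le_univ T.1
    rw [T.2, Fintype.card_fin] at hc
    exact absurd hc (by omega)

end Homology

theorem rigid_aux (R : Type) [CommRing R] [IsNoetherianRing R] [IsLocalRing R]
    (P : Type) [AddCommGroup P] [Module R P] [Module.Finite R P] :
    ∀ (n : ℕ) (f : Fin n → R), (∀ s, f s ∈ IsLocalRing.maximalIdeal R) →
      ∀ i, koszulHomologyVanishes R P f i →
      ∀ j, i ≤ j → koszulHomologyVanishes R P f j := by
  intro n
  induction n with
  | zero =>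
    intro f hf i hi j hij
    obtain rfl | hlt := eq_or_lt_of_le hij
    · exact hi
    · exact vanish_of_lt f (by omega)
  | succ n IH =>
    intro f hf i hi j hij
    set fc : Fin n → R := fun b => f b.castSucc with hfc
    have hfc' : ∀ s, fc s ∈ IsLocalRing.maximalIdeal R := fun s => hf _
    -- Step A: homology of the shorter sequence vanishes in degree i, by Nakayama
    have hA : koszulHomologyVanishes R P fc i := by
      rw [vanish_iff]
      have hfg : (cyc (M := P) fc i).FG := IsNoetherian.noetherian _
      have hle : cyc (M := P) fc i ≤ (bdry (M := P) fc i ⊓ cyc fc i) ⊔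
          (IsLocalRing.maximalIdeal R) • (cyc (M := P) fc i) := by
        intro z' hz'
        have hcycle : chI z' ∈ cyc (M := P) f i := by
          cases i with
          | zero => trivial
          | succ m =>
            show koszulBoundary f m (chI z') = 0
            have hz'' : koszulBoundary fc m z' = 0 := hz'
            rw [koszulBoundary_chI, hz'', chI_zero]
        rw [vanish_iff] at hi
        obtain ⟨w, hw⟩ := hi hcycle
        have hw' : koszulBoundary f i w = chI z' := hw
        have hx : ∀ T, z' T = koszulBoundary fc i (chX w) T
            + ((-1 : ℤ) ^ i) • (f (Fin.last n) • chY w T) := by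
          intro T
          have h1 := chX_koszulBoundary f w T
          rw [hw', chX_chI] at h1
          exact h1
        have hv : chY w ∈ cyc (M := P) fc i := by
          cases i with
          | zero => trivial
          | succ m =>
            show koszulBoundary fc m (chY w) = 0
            funext T
            have h2 := chY_koszulBoundary f w T
            rw [hw', chY_chI] at h2
            exact h2.symm
        have e1 : z' = koszulBoundary fc i (chX w)
            + ((-1 : ℤ) ^ i) • (f (Fin.last n) • chY w) := funext hx
        have hb : koszulBoundary fc i (chX w) ∈ bdry (M := P) fc i ⊓ cyc fc i := by
          constructor
          · exact ⟨chX w, rfl⟩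
          · have : koszulBoundary fc i (chX w)
                = z' - ((-1 : ℤ) ^ i) • (f (Fin.last n) • chY w) := by
              rw [e1]; abel
            rw [this]
            exact Submodule.sub_mem _ hz'
              (zsmul_mem' _ (Submodule.smul_mem _ _ hv) _)
        have hm : ((-1 : ℤ) ^ i) • (f (Fin.last n) • chY w)
            ∈ (IsLocalRing.maximalIdeal R) • (cyc (M := P) fc i) :=
          zsmul_mem' _ (Submodule.smul_mem_smul (hf (Fin.last n)) hv) _
        rw [e1]
        exact Submodule.add_mem_sup hb hm
      exact (Submodule.le_of_le_smul_of_le_jacobson_bot hfg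
        (IsLocalRing.maximalIdeal_le_jacobson ⊥) hle).trans inf_le_left
    -- Step B: induction hypothesis for the shorter sequence
    have hB : ∀ j', i ≤ j' → koszulHomologyVanishes R P fc j' := IH fc hfc' i hA
    -- Step C: conclude for f
    obtain rfl | hlt := eq_or_lt_of_le hij
    · exact hi
    obtain ⟨m, rfl⟩ : ∃ m, j = m + 1 := ⟨j - 1, by omega⟩
    have him : i ≤ m := by omega
    intro z hz
    have hy : chY z ∈ cyc (M := P) fc m := by
      cases m with
      | zero => trivial
      | succ k =>
        show koszulBoundary fc k (chY z) = 0
        funext T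
        have h2 := chY_koszulBoundary f z T
        rw [hz] at h2
        exact h2.symm
    obtain ⟨v, hv⟩ := (vanish_iff fc m).mp (hB m him) hy
    have hv' : koszulBoundary fc m v = chY z := hv
    set z₂ : KoszulChain P (n + 1) (m + 1) := z - koszulBoundary f (m + 1) (chK v) with hz₂
    have hYz₂ : chY z₂ = 0 := by
      funext T
      show chY z T - chY (koszulBoundary f (m + 1) (chK v)) T = 0
      rw [chY_koszulBoundary f (chK v) T]
      have : koszulBoundary fc m (chY (chK v)) T = koszulBoundary fc m v T := by
        rw [chY_chK]
      rw [this, hv']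
      exact sub_self _
    have hdz₂ : koszulBoundary f m z₂ = 0 := by
      have : dLM f m z₂ = dLM f m z - dLM f m (dLM f (m + 1) (chK v)) := map_sub _ _ _
      have h0 : dLM f m (dLM f (m + 1) (chK v)) = 0 :=
        koszulBoundary_koszulBoundary f m (chK v)
      show dLM f m z₂ = 0
      rw [this, h0, sub_zero]
      exact hz
    have hx₂ : chX z₂ ∈ cyc (M := P) fc (m + 1) := by
      show koszulBoundary fc m (chX z₂) = 0
      funext T
      have h1 := chX_koszulBoundary f z₂ T
      rw [hdz₂, hYz₂] at h1
      have : chX (0 : KoszulChain P (n + 1) m) T = 0 := rfl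
      rw [this] at h1
      have h2 : ((-1 : ℤ) ^ m) • (f (Fin.last n) • (0 : KoszulChain P n m) T) = 0 := by
        simp
      rw [h2, add_zero] at h1
      exact h1.symm
    obtain ⟨u, hu⟩ := (vanish_iff fc (m + 1)).mp (hB (m + 1) (by omega)) hx₂
    have hu' : koszulBoundary fc (m + 1) u = chX z₂ := hu
    refine ⟨chK v + chI u, ?_⟩
    have hsplit : koszulBoundary f (m + 1) (chK v + chI u)
        = koszulBoundary f (m + 1) (chK v) + koszulBoundary f (m + 1) (chI u) :=
      map_add (dLM f (m + 1)) _ _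
    rw [hsplit, koszulBoundary_chI, hu']
    have hdecomp : z₂ = chI (chX z₂) + chK (chY z₂) := chain_decomp z₂
    rw [hYz₂, chK_zero, add_zero] at hdecomp
    rw [← hdecomp, hz₂]
    abel

/-- **Rigidity of Koszul homology.** Let `(R, m)` be a Noetherian local ring,
`f = (f_1, …, f_n)` a sequence of elements of `m`, and `P` a finitely generated `R`-module.
If `H_i(f; P) = 0` for some `i`, then `H_j(f; P) = 0` for all `j ≥ i`. -/
theorem koszul_homology_rigidity (R : Type) [CommRing R] [IsNoetherianRing R] [IsLocalRing R]
    (P : Type) [AddCommGroup P] [Module R P] [Module.Finite R P]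
    {n : ℕ} (f : Fin n → R) (hf : ∀ s, f s ∈ IsLocalRing.maximalIdeal R)
    (i : ℕ) (hi : koszulHomologyVanishes R P f i) :
    ∀ j, i ≤ j → koszulHomologyVanishes R P f j := by
  exact rigid_aux R P n f hf i hi
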